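/- For every τ ∈ ℂ and every x ∈ ℂ, the Hermite function satisfies the three-term recurrence relation H_{τ+1}(x) − 2x·H_τ(x) + 2τ·H_{τ−1}(x) = 0. -/

import Mathlib

open Complex MeasureTheory Filter Topology

/-- Pochhammer symbol `(a)_m = a (a+1) ⋯ (a+m-1)` for complex `a`. -/
noncomputable def cPoch (a : ℂ) (m : ℕ) : ℂ := ∏ k ∈ Finset.range m, (a + k)

/-- Confluent hypergeometric function `₁F₁(a, b, z) = Σ (a)_m / (b)_m · z^m / m!`. -/
noncomputable def oneF1 (a b z : ℂ) : ℂ :=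
  ∑' m : ℕ, (cPoch a m / cPoch b m) * z ^ m / (Nat.factorial m : ℂ)

/-- The Hermite function `H_τ` of complex degree `τ`. -/
noncomputable def hermiteFn (τ x : ℂ) : ℂ :=
  2 ^ τ * (Complex.Gamma (1 / 2) / Complex.Gamma ((1 - τ) / 2)) *
      oneF1 (-τ / 2) (1 / 2) (x ^ 2) +
    2 ^ τ * x * (Complex.Gamma (-(1 / 2)) / Complex.Gamma (-τ / 2)) *
      oneF1 ((1 - τ) / 2) (3 / 2) (x ^ 2)

/-- Moments of the generalized Hermite linear functional `𝒢_H(τ)`: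
`m_{2k}(τ) = (τ+1)_{2k} / (k! 2^{2k})` and `m_{2k+1}(τ) = 0`. -/
noncomputable def genHermiteMoment (τ : ℂ) (n : ℕ) : ℂ :=
  if n % 2 = 0 then cPoch (τ + 1) n / (((n / 2).factorial : ℂ) * 2 ^ n) else 0

/-! Split into its parts even and odd in `x`, the recurrence becomes the two contiguous relations
`b (F(a; b) - F(a - 1; b)) = z F(a; b + 1)` and
`b F(a; b) = (b - a) F(a; b + 1) + a F(a + 1; b + 1)` of `F = ₁F₁` at `b = 1/2`, `z = x²`, once the Gamma prefactors are matched through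
`1/Γ(s) = s/Γ(s + 1)` and `Γ(-1/2) = -2 Γ(1/2)`. -/

noncomputable def oneF1Term (a b z : ℂ) (m : ℕ) : ℂ :=
  (cPoch a m / cPoch b m) * z ^ m / (Nat.factorial m : ℂ)

lemma oneF1_eq_tsum (a b z : ℂ) : oneF1 a b z = ∑' m, oneF1Term a b z m := rfl

lemma cPoch_zero (a : ℂ) : cPoch a 0 = 1 := Finset.prod_range_zero _

lemma cPoch_succ_right (a : ℂ) (m : ℕ) : cPoch a (m + 1) = cPoch a m * (a + m) :=
  Finset.prod_range_succ _ _

lemma cPoch_succ_left (a : ℂ) (m : ℕ) : cPoch a (m + 1) = a * cPoch (a + 1) m := by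
  rw [cPoch, Finset.prod_range_succ', Nat.cast_zero, add_zero, mul_comm]
  congr 1
  refine Finset.prod_congr rfl fun k _ => ?_
  push_cast
  ring

lemma cPoch_ne_zero {b : ℂ} (hb : 0 < b.re) (m : ℕ) : cPoch b m ≠ 0 :=
  Finset.prod_ne_zero_iff.mpr fun k _ h => by
    have := congrArg Complex.re h
    simp only [add_re, natCast_re, zero_re] at this
    linarith [k.cast_nonneg (α := ℝ)]

lemma norm_cPoch_le {a b : ℂ} {C : ℝ} (hC : 0 ≤ C) (hab : ∀ k : ℕ, ‖a + k‖ ≤ C * ‖b + k‖)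
    (m : ℕ) : ‖cPoch a m‖ ≤ C ^ m * ‖cPoch b m‖ := by
  induction m with
  | zero => simp [cPoch_zero]
  | succ m ih =>
    rw [cPoch_succ_right, cPoch_succ_right, norm_mul, norm_mul, pow_succ, mul_mul_mul_comm]
    gcongr
    exact hab m

lemma summable_oneF1Term (a : ℂ) {b : ℂ} (hb : 0 < b.re) (z : ℂ) :
    Summable (oneF1Term a b z) := by
  set C := ‖a‖ / b.re + 1
  have hC : 0 ≤ C := by positivity
  have hab (k : ℕ) : ‖a + k‖ ≤ C * ‖b + k‖ := by
    have hre : b.re + k ≤ ‖b + k‖ := by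
      simpa using Complex.re_le_norm (b + k)
    calc ‖a + k‖ ≤ ‖a‖ + k := by simpa using norm_add_le a (k : ℂ)
      _ ≤ C * (b.re + k) := by
        have : 0 ≤ ‖a‖ / b.re * k := by positivity
        rw [mul_add, add_mul, one_mul, div_mul_cancel₀ _ hb.ne']
        linarith
      _ ≤ C * ‖b + k‖ := by gcongr
  refine Summable.of_norm_bounded (Real.summable_pow_div_factorial (C * ‖z‖)) fun m => ?_
  have hb' : 0 < ‖cPoch b m‖ := norm_pos_iff.mpr (cPoch_ne_zero hb m)
  rw [oneF1Term, norm_div, norm_mul, norm_div, norm_pow, Complex.norm_natCast, mul_pow]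
  gcongr
  exact (div_le_iff₀ hb').mpr (norm_cPoch_le hC hab m)

lemma mul_oneF1_sub_oneF1_sub_one (a : ℂ) {b : ℂ} (hb : 0 < b.re) (z : ℂ) :
    b * (oneF1 a b z - oneF1 (a - 1) b z) = z * oneF1 a (b + 1) z := by
  have hb0 : b ≠ 0 := fun h => by simp [h] at hb
  have hb1 : 0 < (b + 1).re := by simp only [add_re, one_re]; linarith
  have hterm (m : ℕ) : b * (oneF1Term a b z (m + 1) - oneF1Term (a - 1) b z (m + 1))
      = z * oneF1Term a (b + 1) z m := by
    have hpoch := cPoch_ne_zero hb1 m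
    have hfact : (m.factorial : ℂ) ≠ 0 := Nat.cast_ne_zero.mpr m.factorial_ne_zero
    rw [oneF1Term, oneF1Term, oneF1Term, cPoch_succ_right, cPoch_succ_left (a - 1),
      sub_add_cancel, cPoch_succ_left b, Nat.factorial_succ]
    push_cast
    field_simp
    ring
  have hs := summable_oneF1Term a hb z
  have hs1 := summable_oneF1Term (a - 1) hb z
  rw [oneF1_eq_tsum, oneF1_eq_tsum, oneF1_eq_tsum, ← hs.tsum_sub hs1, ← tsum_mul_left,
    ← tsum_mul_left, ((hs.sub hs1).mul_left b).tsum_eq_zero_add]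
  have hzero : b * (oneF1Term a b z 0 - oneF1Term (a - 1) b z 0) = 0 := by
    simp [oneF1Term, cPoch_zero]
  rw [hzero, zero_add]
  exact tsum_congr hterm

/-- Termwise, this is `b / (b)_m = (b + m) / (b + 1)_m`. -/
lemma mul_oneF1_eq_oneF1_add_one (a : ℂ) {b : ℂ} (hb : 0 < b.re) (z : ℂ) :
    b * oneF1 a b z = (b - a) * oneF1 a (b + 1) z + a * oneF1 (a + 1) (b + 1) z := by
  have hb1 : 0 < (b + 1).re := by simp only [add_re, one_re]; linarith
  have hterm (m : ℕ) : b * oneF1Term a b z m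
      = (b - a) * oneF1Term a (b + 1) z m + a * oneF1Term (a + 1) (b + 1) z m := by
    have hpoch := cPoch_ne_zero hb m
    have hpoch1 := cPoch_ne_zero hb1 m
    have hfact : (m.factorial : ℂ) ≠ 0 := Nat.cast_ne_zero.mpr m.factorial_ne_zero
    have hshift_a := (cPoch_succ_left a m).symm.trans (cPoch_succ_right a m)
    have hshift_b := (cPoch_succ_left b m).symm.trans (cPoch_succ_right b m)
    simp only [oneF1Term]
    field_simp
    linear_combination z ^ m * (cPoch a m * hshift_b - cPoch b m * hshift_a)
  have hs := summable_oneF1Term a hb1 z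
  have hs1 := summable_oneF1Term (a + 1) hb1 z
  rw [oneF1_eq_tsum, oneF1_eq_tsum, oneF1_eq_tsum, ← tsum_mul_left, ← tsum_mul_left,
    ← tsum_mul_left, ← (hs.mul_left _).tsum_add (hs1.mul_left _)]
  exact tsum_congr hterm

lemma Gamma_neg_one_half : Gamma (-(1 / 2)) = -2 * Gamma (1 / 2) := by
  have h := Gamma_add_one (-(1 / 2) : ℂ) (by norm_num)
  rw [show (-(1 / 2) : ℂ) + 1 = 1 / 2 by norm_num] at h
  linear_combination 2 * h

theorem hermiteFn_three_term_recurrence (τ x : ℂ) :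
    hermiteFn (τ + 1) x - 2 * x * hermiteFn τ x + 2 * τ * hermiteFn (τ - 1) x = 0 := by
  have hhalf : 0 < (1 / 2 : ℂ).re := by norm_num
  have hthree_halves : (1 / 2 : ℂ) + 1 = 3 / 2 := by norm_num
  have heven := mul_oneF1_sub_oneF1_sub_one ((1 - τ) / 2) hhalf (x ^ 2)
  have hodd := mul_oneF1_eq_oneF1_add_one (-τ / 2) hhalf (x ^ 2)
  rw [hthree_halves] at heven hodd
  have hΓodd := one_div_Gamma_eq_self_mul_one_div_Gamma_add_one (-τ / 2)
  have hΓeven := one_div_Gamma_eq_self_mul_one_div_Gamma_add_one ((1 - τ) / 2 - 1)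
  rw [sub_add_cancel] at hΓeven
  simp only [hermiteFn]
  rw [show (-(τ + 1) / 2 : ℂ) = (1 - τ) / 2 - 1 by ring,
    show ((1 - (τ + 1)) / 2 : ℂ) = -τ / 2 by ring,
    show ((1 - (τ - 1)) / 2 : ℂ) = -τ / 2 + 1 by ring,
    show (-(τ - 1) / 2 : ℂ) = (1 - τ) / 2 by ring,
    Gamma_neg_one_half, cpow_add _ _ two_ne_zero, cpow_sub _ _ two_ne_zero, cpow_one]
  linear_combination
    (-4 * (2 : ℂ) ^ τ * Gamma (1 / 2) * (Gamma (-τ / 2))⁻¹) * heven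
    + (-4 * (2 : ℂ) ^ τ * Gamma (1 / 2) * x * (Gamma ((1 - τ) / 2))⁻¹) * hodd
    + (-4 * (2 : ℂ) ^ τ * Gamma (1 / 2) * x * oneF1 (-τ / 2) (3 / 2) (x ^ 2)) * hΓeven
    + (2 * (2 : ℂ) ^ τ * Gamma (1 / 2) * oneF1 ((1 - τ) / 2) (1 / 2) (x ^ 2)) * hΓodd
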